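/- Let G act by isometries on metric spaces (X1,d1) and (X2,d2), with the action on X1 free, and suppose there is C such that for all g,h ∈ G, |d1(g·x1, h·x1) − d2(g·x2, h·x2)| ≤ C for fixed basepoints x1 ∈ X1, x2 ∈ X2. If moreover every point of X1 is within distance D (for d1) of the orbit G·x1 and every point of X2 is within distance D (for d2) of G·x2, then there exists a G-equivariant map f: X1 → X2 and a constant C' with |d1(p,q) − d2(f(p), f(q))| ≤ C' for all p,q ∈ X1. -/
import Mathlib


/-- from a bound on orbits one gets a G-equivariant map f : X1 → X2
with |d1(p,q) − d2(f p, f q)| uniformly bounded. -/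
theorem equivariant_map_from_orbit_bound
    {G X1 X2 : Type*} [Group G] [MulAction G X1] [MulAction G X2]
    (d1 : X1 → X1 → ℝ) (d2 : X2 → X2 → ℝ)
    (hmet1 : (∀ x, d1 x x = 0) ∧ (∀ x y, d1 x y = d1 y x) ∧
      (∀ x y z, d1 x z ≤ d1 x y + d1 y z) ∧ (∀ x y, 0 ≤ d1 x y))
    (hmet2 : (∀ x, d2 x x = 0) ∧ (∀ x y, d2 x y = d2 y x) ∧
      (∀ x y z, d2 x z ≤ d2 x y + d2 y z) ∧ (∀ x y, 0 ≤ d2 x y))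
    (hiso1 : ∀ (g : G) (p q : X1), d1 (g • p) (g • q) = d1 p q)
    (hiso2 : ∀ (g : G) (p q : X2), d2 (g • p) (g • q) = d2 p q)
    (hfree : ∀ (g : G) (p : X1), g • p = p → g = 1)
    (x1 : X1) (x2 : X2)
    (C : ℝ) (hbd : ∀ g h : G, |d1 (g • x1) (h • x1) - d2 (g • x2) (h • x2)| ≤ C)
    (D : ℝ)
    (hdense1 : ∀ p : X1, ∃ g : G, d1 p (g • x1) ≤ D)
    (hdense2 : ∀ q : X2, ∃ g : G, d2 q (g • x2) ≤ D) :
    ∃ (f : X1 → X2) (C' : ℝ),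
      (∀ (g : G) (p : X1), f (g • p) = g • f p) ∧
      (∀ p q : X1, |d1 p q - d2 (f p) (f q)| ≤ C') := by
  classical
  obtain ⟨h10, h1s, h1t, h1n⟩ := hmet1
  obtain ⟨-, -, -, -⟩ := hmet2
  have huniq : ∀ (a b : G) (x : X1), a • x = b • x → a = b := by
    intro a b x hx
    have : (b⁻¹ * a) • x = x := by rw [mul_smul, hx, inv_smul_smul]
    have := hfree _ _ this
    calc a = b * (b⁻¹ * a) := by group
    _ = b := by rw [this, mul_one]
  let rep : X1 → X1 := fun p => (Quotient.mk (MulAction.orbitRel G X1) p).out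
  have hrep : ∀ p : X1, ∃ g : G, g • rep p = p := by
    intro p
    obtain ⟨g, hg⟩ := Quotient.mk_out (s := MulAction.orbitRel G X1) p
    refine ⟨g⁻¹, ?_⟩
    simp only [rep]
    rw [← hg]
    exact inv_smul_smul g p
  have hrepinv : ∀ (g : G) (p : X1), rep (g • p) = rep p := by
    intro g p
    have : (Quotient.mk (MulAction.orbitRel G X1) (g • p)) =
        Quotient.mk (MulAction.orbitRel G X1) p := Quotient.sound ⟨g, rfl⟩
    simp only [rep, this]
  set gp : X1 → G := fun p => (hrep p).choose with hgp
  have hgpspec : ∀ p, gp p • rep p = p := fun p => (hrep p).choose_spec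
  set k : X1 → G := fun p => (hdense1 (rep p)).choose with hk
  have hkspec : ∀ p, d1 (rep p) (k p • x1) ≤ D := fun p => (hdense1 (rep p)).choose_spec
  refine ⟨fun p => (gp p * k p) • x2, C + 2 * D, ?_, ?_⟩
  · intro g p
    have h1 : gp (g • p) • rep p = g • p := by
      have := hgpspec (g • p); rwa [hrepinv] at this
    have h2 : (g * gp p) • rep p = g • p := by rw [mul_smul, hgpspec]
    have hg : gp (g • p) = g * gp p := huniq _ _ _ (h1.trans h2.symm)
    have hk2 : k (g • p) = k p := by simp only [hk, hrepinv]
    simp only [hg, hk2, mul_assoc, mul_smul]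
  · intro p q
    have hnear : ∀ r : X1, d1 r ((gp r * k r) • x1) ≤ D := by
      intro r
      calc d1 r ((gp r * k r) • x1) = d1 (gp r • rep r) (gp r • (k r • x1)) := by
            rw [hgpspec, mul_smul]
        _ = d1 (rep r) (k r • x1) := hiso1 _ _ _
        _ ≤ D := hkspec r
    have hp := hnear p
    have hq := hnear q
    have hb := hbd (gp p * k p) (gp q * k q)
    rw [abs_sub_le_iff] at hb ⊢
    set A := (gp p * k p) • x1
    set B := (gp q * k q) • x1
    have t1 : d1 p q ≤ d1 p A + d1 A B + d1 B q :=
      le_trans (h1t p A q) (by linarith [h1t A B q])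
    have t2 : d1 A B ≤ d1 A p + d1 p q + d1 q B :=
      le_trans (h1t A p B) (by linarith [h1t p q B])
    have sAp : d1 A p = d1 p A := h1s _ _
    have sBq : d1 B q = d1 q B := h1s _ _
    constructor <;> linarith
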